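/- arXiv:1710.08621 — 6 statements merged into one kernel-verified Lean document; each statement's English description precedes it below -/
import Mathlib

section
/- Let S be a linear binary subdivision scheme with finitely supported mask (a_ℓ), defined by (Sx)_i = Σ_j a_{i-2j} x_j for real-valued sequences x. If S is convergent, i.e., for every bounded input sequence x the piecewise linear functions interpolating S^k x at the parameters i/2^k converge uniformly on compact sets to a continuous nonzero limit for some input, then Σ_j a_{i-2j} = 1 for all i (affine invariance). -/
/-!
Pick `t` with `f t ≠ 0` and put `n k = ⌊t 2^k⌋`. Shifting the summation index,
`(S^{k+1} x)_{i + 2 n k} = ∑_j a_{i-2j} (S^k x)_{j + n k}`, a sum over the finitely many `j`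
with `a_{i-2j} ≠ 0`. Both `(i + 2 n k) / 2^{k+1}` and `(j + n k) / 2^k` tend to `t`, so uniform
convergence on the dyadic grids turns this identity into `f t = (∑_j a_{i-2j}) f t` in the limit.
-/

open Filter Topology

lemma hasFiniteSupport_comp_sub_two_mul {M : Type*} [Zero M] {a : ℤ → M}
    (ha : (Function.support a).Finite) (i : ℤ) :
    Function.HasFiniteSupport fun j : ℤ => a (i - 2 * j) :=
  ha.preimage fun _ _ _ _ h => by omega

lemma subdivision_apply_add_two_mul {a : ℤ → ℝ} {S : (ℤ → ℝ) → (ℤ → ℝ)}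
    (hS : ∀ (x : ℤ → ℝ) (i : ℤ), S x i = ∑ᶠ j : ℤ, a (i - 2*j) * x j) (y : ℤ → ℝ) (i n : ℤ) :
    S y (i + 2 * n) = ∑ᶠ j : ℤ, a (i - 2 * j) * y (j + n) := by
  rw [hS, ← finsum_comp_equiv (Equiv.addRight n)]
  simp only [Equiv.coe_addRight]
  congr! 4
  ring

lemma tendsto_add_floor_mul_two_pow_div (c t : ℝ) :
    Tendsto (fun k : ℕ => (c + ⌊t * 2 ^ k⌋) / 2 ^ k) atTop (𝓝 t) := by
  rw [tendsto_iff_norm_sub_tendsto_zero]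
  have hgeom : Tendsto (fun k : ℕ => (|c| + 1) * (1 / 2 : ℝ) ^ k) atTop (𝓝 0) := by
    simpa using (tendsto_pow_atTop_nhds_zero_of_lt_one (by norm_num : (0:ℝ) ≤ 1 / 2)
      (by norm_num)).const_mul (|c| + 1)
  refine squeeze_zero (fun _ => norm_nonneg _) (fun k => ?_) hgeom
  have h2k : (0:ℝ) < 2 ^ k := by positivity
  have hfloor : |(⌊t * 2 ^ k⌋ : ℝ) - t * 2 ^ k| ≤ 1 := by
    rw [abs_le]
    constructor <;> linarith [Int.floor_le (t * 2 ^ k), Int.lt_floor_add_one (t * 2 ^ k)]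
  calc ‖(c + ⌊t * 2 ^ k⌋) / 2 ^ k - t‖ = |c + (⌊t * 2 ^ k⌋ - t * 2 ^ k)| / 2 ^ k := by
        rw [Real.norm_eq_abs, ← abs_of_pos h2k, ← abs_div, abs_of_pos h2k]
        congr 1
        field_simp
        ring
    _ ≤ (|c| + 1) / 2 ^ k := by
        gcongr
        exact (abs_add_le _ _).trans (by linarith)
    _ = (|c| + 1) * (1 / 2) ^ k := by rw [one_div_pow, div_eq_mul_one_div]

lemma tendsto_apply_of_uniform_dyadic {u : ℕ → ℤ → ℝ} {f : ℝ → ℝ} (hf : Continuous f)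
    (hu : ∀ ε > 0, ∃ K, ∀ k ≥ K, ∀ i : ℤ, |u k i - f ((i : ℝ) / 2 ^ k)| ≤ ε)
    {κ : ℕ → ℕ} (hκ : Tendsto κ atTop atTop) {p : ℕ → ℤ} {t : ℝ}
    (hp : Tendsto (fun k => (p k : ℝ) / 2 ^ κ k) atTop (𝓝 t)) :
    Tendsto (fun k => u (κ k) (p k)) atTop (𝓝 (f t)) := by
  have herr : Tendsto (fun k => u (κ k) (p k) - f ((p k : ℝ) / 2 ^ κ k)) atTop (𝓝 0) := by
    rw [Metric.tendsto_atTop]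
    intro ε hε
    obtain ⟨K, hK⟩ := hu (ε / 2) (half_pos hε)
    obtain ⟨k₀, hk₀⟩ := tendsto_atTop_atTop.mp hκ K
    refine ⟨k₀, fun k hk => ?_⟩
    rw [Real.dist_eq, sub_zero]
    linarith [hK (κ k) (hk₀ k hk) (p k)]
  simpa using herr.add ((hf.tendsto t).comp hp)

theorem stmt_0_general (a : ℤ → ℝ) (ha : (Function.support a).Finite)
    (S : (ℤ → ℝ) → (ℤ → ℝ))
    (hS : ∀ (x : ℤ → ℝ) (i : ℤ), S x i = ∑ᶠ j : ℤ, a (i - 2*j) * x j)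
    (hnonzero : ∃ x : ℤ → ℝ, (∃ B, ∀ i, |x i| ≤ B) ∧
      ∃ f : ℝ → ℝ, Continuous f ∧
        (∀ ε > 0, ∃ K, ∀ k ≥ K, ∀ i : ℤ, |S^[k] x i - f ((i : ℝ) / 2 ^ k)| ≤ ε) ∧
        f ≠ 0) :
    ∀ i : ℤ, ∑ᶠ j : ℤ, a (i - 2*j) = 1 := by
  obtain ⟨x, -, f, hf, hconv, hf0⟩ := hnonzero
  obtain ⟨t, ht⟩ := Function.ne_iff.mp hf0
  intro i
  set n : ℕ → ℤ := fun k => ⌊t * 2 ^ k⌋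
  have hF := hasFiniteSupport_comp_sub_two_mul ha i
  have hlhs : Tendsto (fun k => S^[k + 1] x (i + 2 * n k)) atTop (𝓝 (f t)) := by
    refine tendsto_apply_of_uniform_dyadic hf hconv (tendsto_add_atTop_nat 1) ?_
    convert tendsto_add_floor_mul_two_pow_div (i / 2) t using 2 with k
    push_cast
    field_simp
    ring
  have hrhs : Tendsto (fun k => S^[k + 1] x (i + 2 * n k)) atTop
      (𝓝 ((∑ᶠ j : ℤ, a (i - 2*j)) * f t)) := by
    simp_rw [Function.iterate_succ_apply', subdivision_apply_add_two_mul hS,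
      finsum_eq_sum_of_support_subset _
        ((Function.support_mul_subset_left _ _).trans hF.coe_toFinset.ge),
      finsum_eq_sum _ hF, Finset.sum_mul]
    exact tendsto_finsetSum _ fun j _ => ((tendsto_apply_of_uniform_dyadic hf hconv tendsto_id
      (by simpa [n] using tendsto_add_floor_mul_two_pow_div j t)).const_mul _)
  exact mul_eq_right₀ ht |>.mp (tendsto_nhds_unique hrhs hlhs)

/-- Convergence of a linear binary subdivision scheme implies
affine invariance of its mask: `∑ j, a (i - 2*j) = 1` for all `i`. -/
theorem stmt_0 (a : ℤ → ℝ) (ha : (Function.support a).Finite)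
    (S : (ℤ → ℝ) → (ℤ → ℝ))
    (hS : ∀ (x : ℤ → ℝ) (i : ℤ), S x i = ∑ᶠ j : ℤ, a (i - 2*j) * x j)
    (hconv : ∀ x : ℤ → ℝ, (∃ B, ∀ i, |x i| ≤ B) →
      ∃ f : ℝ → ℝ, Continuous f ∧
        ∀ ε > 0, ∃ K, ∀ k ≥ K, ∀ i : ℤ, |S^[k] x i - f ((i : ℝ) / 2 ^ k)| ≤ ε)
    (hnonzero : ∃ x : ℤ → ℝ, (∃ B, ∀ i, |x i| ≤ B) ∧
      ∃ f : ℝ → ℝ, Continuous f ∧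
        (∀ ε > 0, ∃ K, ∀ k ≥ K, ∀ i : ℤ, |S^[k] x i - f ((i : ℝ) / 2 ^ k)| ≤ ε) ∧
        f ≠ 0) :
    ∀ i : ℤ, ∑ᶠ j : ℤ, a (i - 2*j) = 1 :=
  stmt_0_general a ha S hS hnonzero
end

section
/- Let (α_j)_{j=-m}^{m+1} and (β_j)_{j=-m}^{m+1} be real coefficients each summing to 1, and let x_{-m}, …, x_{m+2} be points in ℝ^d. Set x* = Σ_j α_j x_j and x** = Σ_j β_j x_j. Then |x* − x**| ≤ (Σ_{j=-m}^{m+1} |Σ_{i≤j} (α_i − β_i)|) · max_ℓ |x_{ℓ+1} − x_ℓ|, where the maximum is over ℓ = -m, …, m. -/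
/-!
Since both weight sequences sum to 1, the difference `x* - x**` is `∑ⱼ (αⱼ - βⱼ) xⱼ` with
weights summing to 0. Abel summation rewrites such a sum as `∑ⱼ Gⱼ (xⱼ - xⱼ₊₁)` with
`Gⱼ = ∑_{i ≤ j} (αᵢ - βᵢ)`, the boundary term vanishing, and the triangle inequality finishes.
-/

open Finset

theorem Finset.sum_Icc_smul_eq_sum_Ico_partialSum_smul {R E : Type*} [Ring R] [AddCommGroup E]
    [Module R E] (g : ℤ → R) (y : ℤ → E) (a b : ℤ) :
    ∑ j ∈ Icc a b, g j • y j =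
      (∑ j ∈ Icc a b, g j) • y b + ∑ j ∈ Ico a b, (∑ i ∈ Icc a j, g i) • (y j - y (j + 1)) := by
  rcases lt_or_ge b a with hba | hab
  · simp [Icc_eq_empty_of_lt hba, Ico_eq_empty_of_le hba.le]
  induction b, hab using Int.leInduction with
  | base => simp
  | succ b hab ih =>
    rw [← insert_Icc_right_eq_Icc_add_one (by omega), ← insert_Ico_right_eq_Ico_add_one hab,
      sum_insert (by simp), sum_insert (by simp), sum_insert (by simp), ih]
    simp only [add_smul, smul_sub]
    abel

theorem norm_sum_Icc_smul_le_of_sum_eq_zero {E : Type*} [SeminormedAddCommGroup E]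
    [NormedSpace ℝ E] (g : ℤ → ℝ) (y : ℤ → E) {a b : ℤ} {M : ℝ}
    (hg : ∑ j ∈ Icc a b, g j = 0) (hy : ∀ j ∈ Ico a b, ‖y (j + 1) - y j‖ ≤ M) :
    ‖∑ j ∈ Icc a b, g j • y j‖ ≤ (∑ j ∈ Ico a b, |∑ i ∈ Icc a j, g i|) * M := by
  rw [sum_Icc_smul_eq_sum_Ico_partialSum_smul, hg, zero_smul, zero_add, sum_mul]
  refine (norm_sum_le _ _).trans (sum_le_sum fun j hj => ?_)
  rw [norm_smul, Real.norm_eq_abs, norm_sub_rev]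
  exact mul_le_mul_of_nonneg_left (hy j hj) (abs_nonneg _)

/-- Distance between two affine averages of the same points, bounded by
the summed partial differences of the weights times the maximal consecutive distance. -/
theorem stmt_3 (d m : ℕ) (α β : ℤ → ℝ) (x : ℤ → EuclideanSpace ℝ (Fin d))
    (hα : ∑ j ∈ Finset.Icc (-(m:ℤ)) ((m:ℤ)+1), α j = 1)
    (hβ : ∑ j ∈ Finset.Icc (-(m:ℤ)) ((m:ℤ)+1), β j = 1) :
    ‖(∑ j ∈ Finset.Icc (-(m:ℤ)) ((m:ℤ)+1), α j • x j)
        - ∑ j ∈ Finset.Icc (-(m:ℤ)) ((m:ℤ)+1), β j • x j‖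
      ≤ (∑ j ∈ Finset.Icc (-(m:ℤ)) ((m:ℤ)+1),
            |∑ i ∈ Finset.Icc (-(m:ℤ)) j, (α i - β i)|)
        * (Finset.Icc (-(m:ℤ)) (m:ℤ)).sup'
            (Finset.nonempty_Icc.mpr (by omega))
            (fun ℓ => ‖x (ℓ+1) - x ℓ‖) := by
  have hsum : ∑ j ∈ Icc (-(m:ℤ)) (m + 1), (α j - β j) = 0 := by
    rw [sum_sub_distrib, hα, hβ, sub_self]
  rw [← sum_sub_distrib]
  simp_rw [← sub_smul]
  calc _ ≤ (∑ j ∈ Ico (-(m:ℤ)) (m + 1), |∑ i ∈ Icc (-(m:ℤ)) j, (α i - β i)|) *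
          (Icc (-(m:ℤ)) m).sup' (nonempty_Icc.mpr (by omega)) (fun ℓ => ‖x (ℓ + 1) - x ℓ‖) :=
        norm_sum_Icc_smul_le_of_sum_eq_zero _ x hsum fun j hj =>
          le_sup' (fun ℓ => ‖x (ℓ + 1) - x ℓ‖) (by rwa [Ico_add_one_right_eq_Icc] at hj)
    _ = _ := by rw [← sum_Ico_add_eq_sum_Icc (by omega), hsum, abs_zero, add_zero]
end

section
/- Let (M, d) be a complete metric space in which every pair of points is joined by a geodesic, and let T be a binary subdivision operator on sequences in M that is contractive with factor γ < 1 and displacement-safe with constant C. For input data x with ρ := sup_ℓ d(x_{ℓ+1}, x_ℓ) < ∞, let c_k: ℝ → M be the broken geodesic with c_k(i/2^k) = (T^k x)_i, geodesic on each interval [i/2^k, (i+1)/2^k]. Then for all m, sup_{t∈ℝ} d(c_m(t), c_{m+1}(t)) ≤ ρ γ^m + C ρ γ^m + ρ γ^{m+1}, hence (c_k) is uniformly Cauchy on ℝ and converges uniformly to a continuous limit function T^∞x: ℝ → M. -/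
/-!
Contractivity gives `dist ((T^k x) (i+1)) ((T^k x) i) ≤ ρ γ^k`, so on every cell
`[i/2^k, (i+1)/2^k]` the broken geodesic `c k` moves by at most `ρ γ^k`. The node
`n/2^m` carries `(T^m x) n` in `c m` and `(T^{m+1} x) (2n)` in `c (m+1)`, which are
`C ρ γ^m` apart by displacement safety. Any `t` shares a level-`m` cell and a
level-`(m+1)` cell with some such node, so `dist (c m t) (c (m+1) t)` is bounded by
the sum of the three distances. The bound is geometric in `m`, so `(c k)` is
uniformly Cauchy, and its uniform limit is continuous since every `c k` is.
-/

open Set Filter Topology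

section Subdivision

variable {M : Type*} [MetricSpace M] {T : (ℤ → M) → (ℤ → M)} {γ C ρ : ℝ} {x : ℤ → M}

theorem dist_iterate_succ_le
    (hcontr : ∀ (y : ℤ → M) (δ : ℝ), (∀ i, dist (y (i+1)) (y i) ≤ δ) →
      ∀ i, dist (T y (i+1)) (T y i) ≤ γ * δ)
    (hx : ∀ i, dist (x (i+1)) (x i) ≤ ρ) (k : ℕ) (i : ℤ) :
    dist (T^[k] x (i+1)) (T^[k] x i) ≤ ρ * γ ^ k := by
  induction k generalizing i with
  | zero => simpa using hx i
  | succ k ih =>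
    rw [Function.iterate_succ_apply']
    exact (hcontr _ _ ih i).trans_eq (by ring)

theorem dist_iterate_succ_two_mul_le
    (hcontr : ∀ (y : ℤ → M) (δ : ℝ), (∀ i, dist (y (i+1)) (y i) ≤ δ) →
      ∀ i, dist (T y (i+1)) (T y i) ≤ γ * δ)
    (hdisp : ∀ (y : ℤ → M) (δ : ℝ), (∀ i, dist (y (i+1)) (y i) ≤ δ) →
      ∀ i, dist (T y (2*i)) (y i) ≤ C * δ)
    (hx : ∀ i, dist (x (i+1)) (x i) ≤ ρ) (k : ℕ) (i : ℤ) :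
    dist (T^[k+1] x (2*i)) (T^[k] x i) ≤ C * ρ * γ ^ k := by
  rw [Function.iterate_succ_apply', mul_assoc]
  exact hdisp _ _ (dist_iterate_succ_le hcontr hx k) i

end Subdivision

def gridCell (a : ℝ) (i : ℤ) : Set ℝ := Icc (i / a) ((i + 1) / a)

section GridCell

variable {a : ℝ}

theorem mem_gridCell_iff (ha : 0 < a) {i : ℤ} {t : ℝ} :
    t ∈ gridCell a i ↔ (i : ℝ) ≤ t * a ∧ t * a ≤ i + 1 := by
  rw [gridCell, mem_Icc, div_le_iff₀ ha, le_div_iff₀ ha]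

theorem mem_gridCell_floor (ha : 0 < a) (t : ℝ) : t ∈ gridCell a ⌊t * a⌋ :=
  (mem_gridCell_iff ha).2 ⟨Int.floor_le _, (Int.lt_floor_add_one _).le⟩

theorem abs_sub_mul_le_one_of_mem_gridCell (ha : 0 < a) {i : ℤ} {s t : ℝ}
    (hs : s ∈ gridCell a i) (ht : t ∈ gridCell a i) : |s - t| * a ≤ 1 := by
  have hwidth : ((i:ℝ) + 1) / a - i / a = 1 / a := by ring
  rw [← le_div_iff₀ ha, abs_sub_le_iff]
  constructor <;> linarith [hs.1, hs.2, ht.1, ht.2]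

theorem gridCell_mem_nhdsGE (ha : 0 < a) (t : ℝ) : gridCell a ⌊t * a⌋ ∈ 𝓝[≥] t := by
  refine Icc_mem_nhdsGE_of_mem ⟨(mem_gridCell_floor ha t).1, ?_⟩
  rw [lt_div_iff₀ ha]
  exact Int.lt_floor_add_one _

theorem gridCell_mem_nhdsLE (ha : 0 < a) (t : ℝ) : gridCell a (⌈t * a⌉ - 1) ∈ 𝓝[≤] t := by
  refine Icc_mem_nhdsLE_of_mem ⟨?_, ?_⟩
  · rw [div_lt_iff₀ ha]; push_cast; linarith [Int.ceil_lt_add_one (t * a)]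
  · rw [le_div_iff₀ ha]; push_cast; linarith [Int.le_ceil (t * a)]

theorem continuous_of_continuousOn_gridCell {X : Type*} [TopologicalSpace X] {f : ℝ → X}
    (ha : 0 < a) (hf : ∀ i, ContinuousOn f (gridCell a i)) : Continuous f := by
  refine continuous_iff_continuousAt.2 fun t => continuousAt_iff_continuous_left_right.2 ⟨?_, ?_⟩
  · have hcell := gridCell_mem_nhdsLE ha t
    exact (hf _ t (mem_of_mem_nhdsWithin self_mem_Iic hcell)).mono_of_mem_nhdsWithin hcell
  · have hcell := gridCell_mem_nhdsGE ha t
    exact (hf _ t (mem_of_mem_nhdsWithin self_mem_Ici hcell)).mono_of_mem_nhdsWithin hcell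

end GridCell

section BrokenGeodesic

variable {M : Type*} [MetricSpace M] {a : ℝ} {p : ℤ → M} {f : ℝ → M}

theorem dist_le_of_mem_gridCell (ha : 0 < a)
    (hf : ∀ i s t, s ∈ gridCell a i → t ∈ gridCell a i →
      dist (f s) (f t) = |s - t| * a * dist (p i) (p (i+1)))
    {δ : ℝ} (hp : ∀ i, dist (p (i+1)) (p i) ≤ δ) {i : ℤ} {s t : ℝ}
    (hs : s ∈ gridCell a i) (ht : t ∈ gridCell a i) : dist (f s) (f t) ≤ δ := by
  rw [hf i s t hs ht, dist_comm]
  calc |s - t| * a * dist (p (i+1)) (p i) ≤ 1 * dist (p (i+1)) (p i) :=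
        mul_le_mul_of_nonneg_right (abs_sub_mul_le_one_of_mem_gridCell ha hs ht) dist_nonneg
    _ ≤ δ := by simpa using hp i

theorem continuous_of_dist_eq_on_gridCell (ha : 0 < a)
    (hf : ∀ i s t, s ∈ gridCell a i → t ∈ gridCell a i →
      dist (f s) (f t) = |s - t| * a * dist (p i) (p (i+1))) : Continuous f := by
  refine continuous_of_continuousOn_gridCell ha fun i => LipschitzOnWith.continuousOn
    (K := (a * dist (p i) (p (i+1))).toNNReal) (.of_dist_le_mul fun s hs t ht => ?_)
  rw [hf i s t hs ht, Real.coe_toNNReal _ (by positivity), Real.dist_eq]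
  exact le_of_eq (by ring)

theorem dist_le_of_gridCell_refinement {b : ℝ} {q : ℤ → M} {g : ℝ → M} (ha : 0 < a)
    (hb : b = 2 * a) (hfp : ∀ i : ℤ, f (i / a) = p i)
    (hf : ∀ i s t, s ∈ gridCell a i → t ∈ gridCell a i →
      dist (f s) (f t) = |s - t| * a * dist (p i) (p (i+1)))
    (hgq : ∀ j : ℤ, g (j / b) = q j)
    (hg : ∀ j s t, s ∈ gridCell b j → t ∈ gridCell b j →
      dist (g s) (g t) = |s - t| * b * dist (q j) (q (j+1)))
    {δ δ' ε : ℝ} (hp : ∀ i, dist (p (i+1)) (p i) ≤ δ) (hq : ∀ j, dist (q (j+1)) (q j) ≤ δ')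
    (hpq : ∀ i, dist (q (2*i)) (p i) ≤ ε) (t : ℝ) :
    dist (f t) (g t) ≤ δ + ε + δ' := by
  subst hb
  have hnode : ∀ n : ℤ, g (n / a) = q (2 * n) := fun n => by
    rw [← hgq]; congr 1; push_cast; field_simp
  suffices h : ∃ n i j : ℤ, t ∈ gridCell a i ∧ (n / a : ℝ) ∈ gridCell a i ∧
      t ∈ gridCell (2 * a) j ∧ (n / a : ℝ) ∈ gridCell (2 * a) j by
    obtain ⟨n, i, j, hti, hni, htj, hnj⟩ := h
    calc dist (f t) (g t) ≤ dist (f t) (p n) + dist (p n) (q (2*n)) + dist (q (2*n)) (g t) :=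
          dist_triangle4 _ _ _ _
      _ ≤ δ + ε + δ' := by
        gcongr
        · rw [← hfp]; exact dist_le_of_mem_gridCell ha hf hp hti hni
        · rw [dist_comm]; exact hpq n
        · rw [← hnode]; exact dist_le_of_mem_gridCell (by positivity) hg hq hnj htj
  obtain ⟨hil, hir⟩ := (mem_gridCell_iff ha).1 (mem_gridCell_floor ha t)
  simp only [mem_gridCell_iff ha, mem_gridCell_iff (by positivity : 0 < 2 * a),
    mul_left_comm _ 2 a, div_mul_cancel₀ _ ha.ne']
  -- the node is the endpoint of `t`'s coarse cell lying in the same half as `t`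
  rcases le_total (t * a) (⌊t * a⌋ + 1 / 2) with hmid | hmid
  · refine ⟨⌊t * a⌋, ⌊t * a⌋, 2 * ⌊t * a⌋, ?_⟩
    push_cast
    refine ⟨⟨?_, ?_⟩, ⟨?_, ?_⟩, ⟨?_, ?_⟩, ?_, ?_⟩ <;> linarith
  · refine ⟨⌊t * a⌋ + 1, ⌊t * a⌋, 2 * ⌊t * a⌋ + 1, ?_⟩
    push_cast
    refine ⟨⟨?_, ?_⟩, ⟨?_, ?_⟩, ⟨?_, ?_⟩, ?_, ?_⟩ <;> linarith

end BrokenGeodesic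

theorem exists_tendstoUniformly_of_dist_le_geometric {α M : Type*} [MetricSpace M]
    [CompleteSpace M] {F : ℕ → α → M} {K γ : ℝ} (hγ0 : 0 ≤ γ) (hγ1 : γ < 1)
    (hF : ∀ n a, dist (F n a) (F (n+1) a) ≤ K * γ ^ n) : ∃ f, TendstoUniformly F f atTop := by
  choose f hf using fun a =>
    cauchySeq_tendsto_of_complete (cauchySeq_of_le_geometric γ K hγ1 (hF · a))
  have hbound : Tendsto (fun n => K * γ ^ n / (1 - γ)) atTop (𝓝 0) := by
    simpa using ((tendsto_pow_atTop_nhds_zero_of_lt_one hγ0 hγ1).const_mul K).div_const (1 - γ)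
  refine ⟨f, Metric.tendstoUniformly_iff.2 fun ε hε => ?_⟩
  filter_upwards [hbound.eventually (gt_mem_nhds hε)] with n hn a
  rw [dist_comm]
  exact (dist_le_of_le_geometric_of_tendsto γ K hγ1 (hF · a) (hf a) n).trans_lt hn

theorem stmt_6_general {M : Type*} [MetricSpace M] [CompleteSpace M]
    (T : (ℤ → M) → (ℤ → M)) (γ C ρ : ℝ)
    (hγ0 : 0 ≤ γ) (hγ1 : γ < 1)
    (hcontr : ∀ (y : ℤ → M) (δ : ℝ), (∀ i, dist (y (i+1)) (y i) ≤ δ) →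
      ∀ i, dist (T y (i+1)) (T y i) ≤ γ * δ)
    (hdisp : ∀ (y : ℤ → M) (δ : ℝ), (∀ i, dist (y (i+1)) (y i) ≤ δ) →
      ∀ i, dist (T y (2*i)) (y i) ≤ C * δ)
    (x : ℤ → M) (hx : ∀ i, dist (x (i+1)) (x i) ≤ ρ)
    (c : ℕ → ℝ → M)
    (hcinterp : ∀ (k : ℕ) (i : ℤ), c k ((i:ℝ) / 2^k) = T^[k] x i)
    (hcgeo : ∀ (k : ℕ) (i : ℤ), ∀ s t : ℝ,
      s ∈ Set.Icc ((i:ℝ)/2^k) (((i:ℝ)+1)/2^k) →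
      t ∈ Set.Icc ((i:ℝ)/2^k) (((i:ℝ)+1)/2^k) →
        dist (c k s) (c k t)
          = |s - t| * 2^k * dist (T^[k] x i) (T^[k] x (i+1))) :
    (∀ (m : ℕ) (t : ℝ),
        dist (c m t) (c (m+1) t) ≤ ρ * γ^m + C * ρ * γ^m + ρ * γ^(m+1)) ∧
    ∃ f : ℝ → M, Continuous f ∧ TendstoUniformly c f Filter.atTop := by
  have h2pow : ∀ k : ℕ, (0 : ℝ) < 2 ^ k := fun k => by positivity
  have hstep : ∀ (m : ℕ) (t : ℝ),
      dist (c m t) (c (m+1) t) ≤ ρ * γ^m + C * ρ * γ^m + ρ * γ^(m+1) := fun m =>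
    dist_le_of_gridCell_refinement (h2pow m) (pow_succ' 2 m) (hcinterp m) (hcgeo m)
      (hcinterp (m+1)) (hcgeo (m+1)) (dist_iterate_succ_le hcontr hx m)
      (dist_iterate_succ_le hcontr hx (m+1)) (dist_iterate_succ_two_mul_le hcontr hdisp hx m)
  obtain ⟨f, hf⟩ := exists_tendstoUniformly_of_dist_le_geometric (K := ρ + C * ρ + ρ * γ)
    hγ0 hγ1 fun m t => (hstep m t).trans_eq (by ring)
  refine ⟨hstep, f, hf.continuous (.of_forall fun k => ?_), hf⟩
  exact continuous_of_dist_eq_on_gridCell (h2pow k) (hcgeo k)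

/-- Convergence of a contractive, displacement-safe subdivision scheme
in a complete geodesic metric space: the broken geodesics `c_k` interpolating
`T^k x` at parameters `i/2^k` satisfy
`dist (c_m t) (c_{m+1} t) ≤ ρ γ^m + C ρ γ^m + ρ γ^{m+1}` and converge uniformly
to a continuous limit. -/
theorem stmt_6 {M : Type*} [MetricSpace M] [CompleteSpace M]
    (hgeo : ∀ p q : M, ∃ g : ℝ → M, g 0 = p ∧ g 1 = q ∧
      ∀ s t : ℝ, s ∈ Set.Icc (0:ℝ) 1 → t ∈ Set.Icc (0:ℝ) 1 →
        dist (g s) (g t) = |s - t| * dist p q)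
    (T : (ℤ → M) → (ℤ → M)) (γ C ρ : ℝ)
    (hγ0 : 0 ≤ γ) (hγ1 : γ < 1) (hC : 0 ≤ C) (hρ0 : 0 ≤ ρ)
    (hcontr : ∀ (y : ℤ → M) (δ : ℝ), (∀ i, dist (y (i+1)) (y i) ≤ δ) →
      ∀ i, dist (T y (i+1)) (T y i) ≤ γ * δ)
    (hdisp : ∀ (y : ℤ → M) (δ : ℝ), (∀ i, dist (y (i+1)) (y i) ≤ δ) →
      ∀ i, dist (T y (2*i)) (y i) ≤ C * δ)
    (x : ℤ → M) (hx : ∀ i, dist (x (i+1)) (x i) ≤ ρ)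
    (c : ℕ → ℝ → M)
    (hcinterp : ∀ (k : ℕ) (i : ℤ), c k ((i:ℝ) / 2^k) = T^[k] x i)
    (hcgeo : ∀ (k : ℕ) (i : ℤ), ∀ s t : ℝ,
      s ∈ Set.Icc ((i:ℝ)/2^k) (((i:ℝ)+1)/2^k) →
      t ∈ Set.Icc ((i:ℝ)/2^k) (((i:ℝ)+1)/2^k) →
        dist (c k s) (c k t)
          = |s - t| * 2^k * dist (T^[k] x i) (T^[k] x (i+1))) :
    (∀ (m : ℕ) (t : ℝ),
        dist (c m t) (c (m+1) t) ≤ ρ * γ^m + C * ρ * γ^m + ρ * γ^(m+1)) ∧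
    ∃ f : ℝ → M, Continuous f ∧ TendstoUniformly c f Filter.atTop :=
  stmt_6_general T γ C ρ hγ0 hγ1 hcontr hdisp x hx c hcinterp hcgeo
end

section
/- Under the hypotheses of the convergence theorem (T contractive with factor γ < 1 and displacement-safe with constant C on a complete geodesic metric space, input data with ρ = sup_ℓ d(x_{ℓ+1}, x_ℓ) < ∞), the limit curve T^∞x is Hölder continuous with exponent ι = −log γ / log 2: for all t₁, t₂ ∈ ℝ with |t₁ − t₂| < 1, d(T^∞x(t₁), T^∞x(t₂)) ≤ D |t₂ − t₁|^ι, where D = 2((Cρ + ρ + γρ)/(1−γ) + ρ). -/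
/-!
Each `c k` is a broken geodesic through points at mesh `2⁻ᵏ` whose consecutive distances are at
most `γ ^ k * ρ`, so `c k` is `2 ^ k * γ ^ k * ρ`-Lipschitz. Comparing `c k` and `c (k + 1)` at the
node of level `k` nearest to `t`, where displacement-safety applies, gives
`d(c k t, c (k + 1) t) ≤ (Cρ + ρ + γρ) γ ^ k`, hence `d(c k t, T^∞x t) ≤ (Cρ + ρ + γρ) γ ^ k / (1 - γ)`.
For `2⁻ᵏ ≤ |t₂ - t₁| ≤ 2¹⁻ᵏ`, passing through `c k` bounds `d(T^∞x t₁, T^∞x t₂)` by `D γ ^ k`, and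
`γ ^ k = (2⁻ᵏ) ^ ι ≤ |t₂ - t₁| ^ ι`.
-/

open Set

section PiecewiseLipschitz

variable {M : Type*} [PseudoMetricSpace M] {g : ℝ → M} {L : ℝ}

lemma dist_le_mul_abs_sub_of_Icc_union {a b c : ℝ}
    (hab : ∀ s ∈ Icc a b, ∀ t ∈ Icc a b, dist (g s) (g t) ≤ L * |s - t|)
    (hbc : ∀ s ∈ Icc b c, ∀ t ∈ Icc b c, dist (g s) (g t) ≤ L * |s - t|) :
    ∀ s ∈ Icc a c, ∀ t ∈ Icc a c, dist (g s) (g t) ≤ L * |s - t| := by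
  intro s hs t ht
  wlog hst : s ≤ t generalizing s t
  · simpa only [dist_comm, abs_sub_comm] using this t ht s hs (le_of_not_ge hst)
  rcases le_total t b with htb | hbt
  · exact hab s ⟨hs.1, hst.trans htb⟩ t ⟨ht.1, htb⟩
  rcases le_total b s with hbs | hsb
  · exact hbc s ⟨hbs, hs.2⟩ t ⟨hbs.trans hst, ht.2⟩
  calc dist (g s) (g t) ≤ dist (g s) (g b) + dist (g b) (g t) := dist_triangle _ _ _
    _ ≤ L * |s - b| + L * |b - t| :=
      add_le_add (hab s ⟨hs.1, hsb⟩ b ⟨hs.1.trans hsb, le_rfl⟩)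
        (hbc b ⟨le_rfl, hbt.trans ht.2⟩ t ⟨hbt, ht.2⟩)
    _ = L * |s - t| := by
      rw [abs_of_nonpos (by linarith), abs_of_nonpos (by linarith), abs_of_nonpos (by linarith)]
      ring

lemma dist_le_mul_abs_sub_of_forall_Icc {N : ℝ} (hN : 0 < N)
    (hg : ∀ i : ℤ, ∀ s ∈ Icc (i / N) ((i + 1) / N), ∀ t ∈ Icc (i / N) ((i + 1) / N),
      dist (g s) (g t) ≤ L * |s - t|)
    (s t : ℝ) : dist (g s) (g t) ≤ L * |s - t| := by
  have hchain : ∀ (i : ℤ) (n : ℕ), ∀ s ∈ Icc (i / N) ((i + n) / N),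
      ∀ t ∈ Icc (i / N) ((i + n) / N), dist (g s) (g t) ≤ L * |s - t| := by
    intro i n
    induction n with
    | zero =>
      simp only [Nat.cast_zero, add_zero, Icc_self, mem_singleton_iff]
      rintro s rfl t rfl
      simp
    | succ n ih =>
      refine dist_le_mul_abs_sub_of_Icc_union ih ?_
      simpa only [Int.cast_add, Int.cast_natCast, Nat.cast_succ, add_assoc] using hg (i + n)
  obtain ⟨n, hn⟩ := exists_nat_ge (max s t * N - ⌊min s t * N⌋)
  have hlow : ((⌊min s t * N⌋ : ℤ) : ℝ) ≤ min s t * N := Int.floor_le _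
  have hmem : ∀ r, min s t ≤ r → r ≤ max s t →
      r ∈ Icc ((⌊min s t * N⌋ : ℝ) / N) ((⌊min s t * N⌋ + n) / N) := fun r h₁ h₂ =>
    ⟨(div_le_iff₀ hN).2 (by nlinarith), (le_div_iff₀ hN).2 (by nlinarith)⟩
  exact hchain _ n s (hmem s (min_le_left s t) (le_max_left s t))
    t (hmem t (min_le_right s t) (le_max_right s t))

end PiecewiseLipschitz

section Subdivision

variable {M : Type*} [PseudoMetricSpace M]

def IsContractive (T : (ℤ → M) → (ℤ → M)) (γ : ℝ) : Prop :=
  ∀ (y : ℤ → M) (δ : ℝ), (∀ i, dist (y (i + 1)) (y i) ≤ δ) →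
    ∀ i, dist (T y (i + 1)) (T y i) ≤ γ * δ

def IsDisplacementSafe (T : (ℤ → M) → (ℤ → M)) (C : ℝ) : Prop :=
  ∀ (y : ℤ → M) (δ : ℝ), (∀ i, dist (y (i + 1)) (y i) ≤ δ) →
    ∀ i, dist (T y (2 * i)) (y i) ≤ C * δ

-- Only the metric half of "the broken geodesic through `y`": `g (i / N) = y i` is not part of it.
def IsBrokenGeodesic (g : ℝ → M) (N : ℝ) (y : ℤ → M) : Prop :=
  ∀ (i : ℤ) (s t : ℝ), s ∈ Icc ((i : ℝ) / N) (((i : ℝ) + 1) / N) →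
    t ∈ Icc ((i : ℝ) / N) (((i : ℝ) + 1) / N) →
      dist (g s) (g t) = |s - t| * N * dist (y i) (y (i + 1))

variable {T : (ℤ → M) → (ℤ → M)} {γ C ρ : ℝ} {x : ℤ → M}

lemma IsContractive.dist_iterate_le (hT : IsContractive T γ)
    (hx : ∀ i, dist (x (i + 1)) (x i) ≤ ρ) (k : ℕ) (i : ℤ) :
    dist (T^[k] x (i + 1)) (T^[k] x i) ≤ γ ^ k * ρ := by
  induction k generalizing i with
  | zero => simpa using hx i
  | succ k ih =>
    rw [Function.iterate_succ_apply', pow_succ', mul_assoc]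
    exact hT _ _ ih i

lemma IsDisplacementSafe.dist_iterate_le (hD : IsDisplacementSafe T C) (hT : IsContractive T γ)
    (hx : ∀ i, dist (x (i + 1)) (x i) ≤ ρ) (k : ℕ) (i : ℤ) :
    dist (T^[k + 1] x (2 * i)) (T^[k] x i) ≤ C * (γ ^ k * ρ) := by
  rw [Function.iterate_succ_apply']
  exact hD _ _ (hT.dist_iterate_le hx k) i

variable {g : ℝ → M} {N δ : ℝ} {y : ℤ → M}

lemma IsBrokenGeodesic.dist_le (hg : IsBrokenGeodesic g N y) (hN : 0 < N)
    (hy : ∀ i, dist (y (i + 1)) (y i) ≤ δ) (s t : ℝ) :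
    dist (g s) (g t) ≤ N * δ * |s - t| := by
  refine dist_le_mul_abs_sub_of_forall_Icc hN (fun i s hs t ht => ?_) s t
  rw [hg i s t hs ht, dist_comm, mul_comm (N * δ), mul_assoc]
  gcongr
  exact hy i

lemma IsBrokenGeodesic.dist_le_of_abs_sub_le (hg : IsBrokenGeodesic g N y) (hN : 0 < N)
    (hy : ∀ i, dist (y (i + 1)) (y i) ≤ δ) (hδ : 0 ≤ δ) {s t : ℝ} (hst : |s - t| ≤ N⁻¹) :
    dist (g s) (g t) ≤ δ :=
  calc dist (g s) (g t) ≤ N * δ * |s - t| := hg.dist_le hN hy s t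
    _ ≤ N * δ * N⁻¹ := by gcongr
    _ = δ := by field_simp

variable {c : ℕ → ℝ → M}

lemma dist_refine_le (hT : IsContractive T γ) (hD : IsDisplacementSafe T C) (hγ0 : 0 ≤ γ)
    (hρ0 : 0 ≤ ρ) (hx : ∀ i, dist (x (i + 1)) (x i) ≤ ρ)
    (hcinterp : ∀ (k : ℕ) (i : ℤ), c k ((i : ℝ) / 2 ^ k) = T^[k] x i)
    (hcgeo : ∀ k : ℕ, IsBrokenGeodesic (c k) (2 ^ k) (T^[k] x)) (k : ℕ) (t : ℝ) :
    dist (c k t) (c (k + 1) t) ≤ (C * ρ + ρ + γ * ρ) * γ ^ k := by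
  set i := round (t * 2 ^ k)
  have hi : |t - i / 2 ^ k| ≤ (2 ^ (k + 1))⁻¹ := by
    have h := abs_sub_round (t * 2 ^ k)
    rw [show t * 2 ^ k - i = (t - i / 2 ^ k) * 2 ^ k by field_simp, abs_mul,
      abs_of_pos (by positivity : (0 : ℝ) < 2 ^ k)] at h
    calc |t - i / 2 ^ k| ≤ 1 / 2 / 2 ^ k := (le_div_iff₀ (by positivity)).2 h
      _ = (2 ^ (k + 1))⁻¹ := by ring
  have hnode : c (k + 1) (i / 2 ^ k) = T^[k + 1] x (2 * i) := by
    rw [← hcinterp]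
    congr 1
    push_cast
    ring
  have hstep := fun m => hT.dist_iterate_le hx m
  calc dist (c k t) (c (k + 1) t)
      ≤ dist (c k t) (c k (i / 2 ^ k)) + dist (c k (i / 2 ^ k)) (c (k + 1) (i / 2 ^ k))
        + dist (c (k + 1) (i / 2 ^ k)) (c (k + 1) t) := dist_triangle4 _ _ _ _
    _ ≤ γ ^ k * ρ + C * (γ ^ k * ρ) + γ ^ (k + 1) * ρ := by
      gcongr
      · refine (hcgeo k).dist_le_of_abs_sub_le (by positivity) (hstep k) (by positivity)
          (hi.trans ?_)
        gcongr
        · norm_num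
        · omega
      · rw [hnode, hcinterp, dist_comm]
        exact hD.dist_iterate_le hT hx k i
      · refine (hcgeo (k + 1)).dist_le_of_abs_sub_le (by positivity) (hstep (k + 1))
          (by positivity) ?_
        rwa [abs_sub_comm]
    _ = (C * ρ + ρ + γ * ρ) * γ ^ k := by ring

end Subdivision

section Holder

lemma pow_le_rpow_neg_log_div_log_two {γ u : ℝ} (hγ0 : 0 ≤ γ) (hγ1 : γ ≤ 1) {k : ℕ}
    (hk : (2⁻¹ : ℝ) ^ k ≤ u) : γ ^ k ≤ u ^ (-Real.log γ / Real.log 2) := by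
  rcases hγ0.eq_or_lt with rfl | hγ
  · simpa using pow_le_one₀ le_rfl zero_le_one
  have hι : -Real.log γ / Real.log 2 = Real.logb 2⁻¹ γ := by
    rw [← Real.log_div_log, Real.log_inv, div_neg, neg_div]
  have hι0 : 0 ≤ Real.logb 2⁻¹ γ := by
    rw [← hι]
    exact div_nonneg (neg_nonneg.2 (Real.log_nonpos hγ0 hγ1)) (Real.log_nonneg one_le_two)
  calc γ ^ k = ((2⁻¹ : ℝ) ^ Real.logb 2⁻¹ γ) ^ k := by
        rw [Real.rpow_logb (by norm_num) (by norm_num) hγ]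
    _ = ((2⁻¹ : ℝ) ^ k) ^ Real.logb 2⁻¹ γ := Real.rpow_pow_comm (by norm_num) _ _
    _ ≤ u ^ (-Real.log γ / Real.log 2) := by
      rw [hι]
      exact Real.rpow_le_rpow (by positivity) hk hι0

lemma exists_inv_two_pow_le_and_le_two {u : ℝ} (hu0 : 0 < u) (hu1 : u < 1) :
    ∃ k : ℕ, (2⁻¹ : ℝ) ^ k ≤ u ∧ u * 2 ^ k ≤ 2 := by
  obtain ⟨n, hn, hn'⟩ := exists_nat_pow_near (one_le_inv₀ hu0 |>.2 hu1.le) one_lt_two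
  refine ⟨n + 1, ?_, ?_⟩
  · rw [inv_pow]
    exact (inv_le_comm₀ (by positivity) hu0).2 hn'.le
  · calc u * 2 ^ (n + 1) = 2 * (u * 2 ^ n) := by ring
      _ ≤ 2 * (u * u⁻¹) := by gcongr
      _ = 2 := by rw [mul_inv_cancel₀ hu0.ne', mul_one]

variable {M : Type*} [PseudoMetricSpace M]

lemma dist_le_mul_rpow_of_approx {f : ℝ → M} {c : ℕ → ℝ → M} {γ ρ A : ℝ} (hγ0 : 0 ≤ γ)
    (hγ1 : γ ≤ 1) (hρ0 : 0 ≤ ρ)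
    (hc : ∀ (k : ℕ) (s t : ℝ), dist (c k s) (c k t) ≤ 2 ^ k * (γ ^ k * ρ) * |s - t|)
    (hcf : ∀ (k : ℕ) (t : ℝ), dist (c k t) (f t) ≤ A * γ ^ k) {t₁ t₂ : ℝ} (h : |t₁ - t₂| < 1) :
    dist (f t₁) (f t₂) ≤ 2 * (A + ρ) * |t₂ - t₁| ^ (-Real.log γ / Real.log 2) := by
  have hA : 0 ≤ A := by simpa using dist_nonneg.trans (hcf 0 t₁)
  rcases eq_or_ne t₁ t₂ with rfl | hne
  · rw [dist_self]
    positivity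
  rw [abs_sub_comm] at h
  obtain ⟨k, hk, hku⟩ :=
    exists_inv_two_pow_le_and_le_two (abs_pos.2 (sub_ne_zero.2 hne.symm)) h
  calc dist (f t₁) (f t₂)
      ≤ dist (c k t₁) (f t₁) + dist (c k t₁) (c k t₂) + dist (c k t₂) (f t₂) := by
        rw [dist_comm (c k t₁)]
        exact dist_triangle4 _ _ _ _
    _ ≤ A * γ ^ k + 2 ^ k * (γ ^ k * ρ) * |t₂ - t₁| + A * γ ^ k := by
        rw [abs_sub_comm]
        gcongr <;> apply_assumption
    _ ≤ 2 * (A + ρ) * γ ^ k := by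
        have : 0 ≤ γ ^ k * ρ := by positivity
        nlinarith
    _ ≤ 2 * (A + ρ) * |t₂ - t₁| ^ (-Real.log γ / Real.log 2) := by
        gcongr
        exact pow_le_rpow_neg_log_div_log_two hγ0 hγ1 hk

end Holder

theorem stmt_7_general {M : Type*} [MetricSpace M]
    (T : (ℤ → M) → (ℤ → M)) (γ C ρ : ℝ)
    (hγ0 : 0 ≤ γ) (hγ1 : γ < 1) (hρ0 : 0 ≤ ρ)
    (hcontr : ∀ (y : ℤ → M) (δ : ℝ), (∀ i, dist (y (i+1)) (y i) ≤ δ) →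
      ∀ i, dist (T y (i+1)) (T y i) ≤ γ * δ)
    (hdisp : ∀ (y : ℤ → M) (δ : ℝ), (∀ i, dist (y (i+1)) (y i) ≤ δ) →
      ∀ i, dist (T y (2*i)) (y i) ≤ C * δ)
    (x : ℤ → M) (hx : ∀ i, dist (x (i+1)) (x i) ≤ ρ)
    (c : ℕ → ℝ → M)
    (hcinterp : ∀ (k : ℕ) (i : ℤ), c k ((i:ℝ) / 2^k) = T^[k] x i)
    (hcgeo : ∀ (k : ℕ) (i : ℤ), ∀ s t : ℝ,
      s ∈ Set.Icc ((i:ℝ)/2^k) (((i:ℝ)+1)/2^k) →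
      t ∈ Set.Icc ((i:ℝ)/2^k) (((i:ℝ)+1)/2^k) →
        dist (c k s) (c k t)
          = |s - t| * 2^k * dist (T^[k] x i) (T^[k] x (i+1)))
    (f : ℝ → M) (hf : TendstoUniformly c f Filter.atTop) :
    ∀ t₁ t₂ : ℝ, |t₁ - t₂| < 1 →
      dist (f t₁) (f t₂)
        ≤ (2 * ((C * ρ + ρ + γ * ρ) / (1 - γ) + ρ))
            * |t₂ - t₁| ^ (-(Real.log γ) / Real.log 2) := by
  intro t₁ t₂ h
  have hLip (k : ℕ) (s t : ℝ) : dist (c k s) (c k t) ≤ 2 ^ k * (γ ^ k * ρ) * |s - t| :=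
    IsBrokenGeodesic.dist_le (hcgeo k) (by positivity) (IsContractive.dist_iterate_le hcontr hx k)
      s t
  have hlimit (k : ℕ) (t : ℝ) :
      dist (c k t) (f t) ≤ (C * ρ + ρ + γ * ρ) / (1 - γ) * γ ^ k := by
    rw [div_mul_eq_mul_div]
    exact dist_le_of_le_geometric_of_tendsto _ _ hγ1
      (dist_refine_le hcontr hdisp hγ0 hρ0 hx hcinterp hcgeo · t) (hf.tendsto_at t) k
  exact dist_le_mul_rpow_of_approx hγ0 hγ1.le hρ0 hLip hlimit h

/-- Hölder continuity of the limit curve `T^∞x` with exponent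
`ι = -log γ / log 2` and constant `D = 2((Cρ + ρ + γρ)/(1-γ) + ρ)`. -/
theorem stmt_7 {M : Type*} [MetricSpace M] [CompleteSpace M]
    (hgeo : ∀ p q : M, ∃ g : ℝ → M, g 0 = p ∧ g 1 = q ∧
      ∀ s t : ℝ, s ∈ Set.Icc (0:ℝ) 1 → t ∈ Set.Icc (0:ℝ) 1 →
        dist (g s) (g t) = |s - t| * dist p q)
    (T : (ℤ → M) → (ℤ → M)) (γ C ρ : ℝ)
    (hγ0 : 0 ≤ γ) (hγ1 : γ < 1) (hC : 0 ≤ C) (hρ0 : 0 ≤ ρ)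
    (hcontr : ∀ (y : ℤ → M) (δ : ℝ), (∀ i, dist (y (i+1)) (y i) ≤ δ) →
      ∀ i, dist (T y (i+1)) (T y i) ≤ γ * δ)
    (hdisp : ∀ (y : ℤ → M) (δ : ℝ), (∀ i, dist (y (i+1)) (y i) ≤ δ) →
      ∀ i, dist (T y (2*i)) (y i) ≤ C * δ)
    (x : ℤ → M) (hx : ∀ i, dist (x (i+1)) (x i) ≤ ρ)
    (c : ℕ → ℝ → M)
    (hcinterp : ∀ (k : ℕ) (i : ℤ), c k ((i:ℝ) / 2^k) = T^[k] x i)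
    (hcgeo : ∀ (k : ℕ) (i : ℤ), ∀ s t : ℝ,
      s ∈ Set.Icc ((i:ℝ)/2^k) (((i:ℝ)+1)/2^k) →
      t ∈ Set.Icc ((i:ℝ)/2^k) (((i:ℝ)+1)/2^k) →
        dist (c k s) (c k t)
          = |s - t| * 2^k * dist (T^[k] x i) (T^[k] x (i+1)))
    (f : ℝ → M) (hf : TendstoUniformly c f Filter.atTop) :
    ∀ t₁ t₂ : ℝ, |t₁ - t₂| < 1 →
      dist (f t₁) (f t₂)
        ≤ (2 * ((C * ρ + ρ + γ * ρ) / (1 - γ) + ρ))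
            * |t₂ - t₁| ^ (-(Real.log γ) / Real.log 2) :=
  stmt_7_general T γ C ρ hγ0 hγ1 hρ0 hcontr hdisp x hx c hcinterp hcgeo f hf
end

section
/- Let (α_j)_{j=-m}^{m+1}, (β_j)_{j=-m}^{m+1} be the coefficients of the two rules of a binary linear scheme S, i.e., (Sx)_{2i} = Σ_j α_j x_{i+j} and (Sx)_{2i+1} = Σ_j β_j x_{i+j}, with Σ_j α_j = Σ_j β_j = 1 and all α_j, β_j ≥ 0 (nonnegative mask). If additionally the sequences of partial sums satisfy γ := max_{r∈{1,2}} Σ_j |γ^{(r+1)}_j − γ^{(r)}_j| < 1 (with γ^{(r)}_j = Σ_{i≤j} a_{r-2i} and mask a determined by α, β), then for sequences x in any normed vector space, sup_i ‖(Sx)_{i+1} − (Sx)_i‖ ≤ γ · sup_i ‖x_{i+1} − x_i‖. -/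
/-- The mask `a` of the binary scheme with even rule coefficients `α` and odd rule
coefficients `β`: `a (-2j) = α j` and `a (1-2j) = β j`. -/
def maskOf (α β : ℤ → ℝ) : ℤ → ℝ := fun ℓ =>
  if ℓ % 2 = 0 then α (-(ℓ/2)) else β ((1-ℓ)/2)

/-!
Writing the scheme through its mask, `(Sx)_{n+1} - (Sx)_n = ∑_ℓ c_ℓ x_ℓ` with
`c_ℓ = a_{n+1-2ℓ} - a_{n-2ℓ}`. Both rules reproduce constants, so `∑_ℓ c_ℓ = 0`, and summation
by parts turns the difference into `-∑_j C_j (x_{j+1} - x_j)`, where the partial sums are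
`C_j = γ^{(n+1)}_j - γ^{(n)}_j`. This bounds the norm by `∑_j |γ^{(n+1)}_j - γ^{(n)}_j| · δ`, a
factor that depends only on the parity of `n` since `γ^{(r+2)}_j = γ^{(r)}_{j-1}`.
-/

open Function Set

noncomputable section

variable {V : Type*} [SeminormedAddCommGroup V] [NormedSpace ℝ V]
variable {W : Type*} [AddCommMonoid W] [Module ℝ W]

theorem Int.sum_Icc_by_parts {R M : Type*} [CommRing R] [AddCommGroup M] [Module R M]
    {a b : ℤ} (hab : a ≤ b) (c : ℤ → R) (y : ℤ → M) :
    ∑ j ∈ Finset.Icc a b, c j • y j = (∑ t ∈ Finset.Icc a b, c t) • y b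
      - ∑ j ∈ Finset.Ico a b, (∑ t ∈ Finset.Icc a j, c t) • (y (j + 1) - y j) := by
  induction b, hab using Int.leInduction with
  | base => simp
  | succ b hab ih =>
    rw [← Finset.insert_Icc_right_eq_Icc_add_one (by omega),
      ← Finset.insert_Ico_right_eq_Ico_add_one hab, Finset.sum_insert (by simp),
      Finset.sum_insert (by simp), Finset.sum_insert (by simp), ih]
    module

theorem norm_finsum_smul_le_of_finsum_eq_zero {c : ℤ → ℝ} (hc : (support c).Finite)
    (hc0 : ∑ᶠ j, c j = 0) {y : ℤ → V} {δ : ℝ} (hy : ∀ j, ‖y (j + 1) - y j‖ ≤ δ) :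
    ‖∑ᶠ j, c j • y j‖ ≤ (∑ᶠ j, |∑ᶠ t ∈ Iic j, c t|) * δ := by
  obtain ⟨a, b, hab, hcab⟩ : ∃ a b : ℤ, a ≤ b ∧ support c ⊆ (Finset.Icc a b : Set ℤ) := by
    obtain ⟨a, ha⟩ := hc.bddBelow
    obtain ⟨b, hb⟩ := hc.bddAbove
    refine ⟨a, max a b, le_max_left a b, ?_⟩
    intro j hj
    rw [Finset.coe_Icc]
    exact ⟨ha hj, le_max_of_le_right (hb hj)⟩
  have hpartial : ∀ j, ∑ᶠ t ∈ Iic j, c t = ∑ t ∈ Finset.Icc a j, c t := fun j =>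
    finsum_mem_eq_sum_of_inter_support_eq c <| Set.ext fun t => by
      have hta : t ∈ support c → a ≤ t := fun ht => (Finset.mem_Icc.1 (hcab ht)).1
      simp only [mem_inter_iff, mem_Iic, Finset.coe_Icc, mem_Icc]
      exact ⟨fun ⟨htj, ht⟩ => ⟨⟨hta ht, htj⟩, ht⟩, fun ⟨⟨_, htj⟩, ht⟩ => ⟨htj, ht⟩⟩
  have htotal : ∑ t ∈ Finset.Icc a b, c t = 0 := by
    rwa [finsum_eq_sum_of_support_subset c hcab] at hc0
  have hpartial_zero : ∀ j ∉ Finset.Ico a b, ∑ t ∈ Finset.Icc a j, c t = 0 := by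
    intro j hj
    rcases lt_or_ge j a with hja | hbj
    · simp [Finset.Icc_eq_empty_of_lt hja]
    · rw [Finset.mem_Ico] at hj
      rw [← htotal]
      refine (Finset.sum_subset (Finset.Icc_subset_Icc le_rfl (by omega)) fun t _ ht => ?_).symm
      exact notMem_support.1 fun h => ht (hcab h)
  simp_rw [hpartial]
  rw [finsum_eq_sum_of_support_subset _ fun j hj => hcab (left_ne_zero_of_smul hj),
    finsum_eq_sum_of_support_subset _ (s := Finset.Ico a b) fun j hj => by
      by_contra h; simp [hpartial_zero j h] at hj,
    Int.sum_Icc_by_parts hab, htotal, zero_smul, zero_sub, norm_neg, Finset.sum_mul]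
  refine (norm_sum_le _ _).trans (Finset.sum_le_sum fun j _ => ?_)
  rw [norm_smul, Real.norm_eq_abs]
  exact mul_le_mul_of_nonneg_left (hy j) (abs_nonneg _)

theorem finsum_mem_sub_distrib' {α G : Type*} [AddCommGroup G] {f g : α → G} {s : Set α}
    (hf : (s ∩ support f).Finite) (hg : (s ∩ support g).Finite) :
    ∑ᶠ i ∈ s, (f i - g i) = ∑ᶠ i ∈ s, f i - ∑ᶠ i ∈ s, g i := by
  rw [← support_indicator] at hf hg
  simp only [finsum_mem_def, indicator_sub]
  exact finsum_sub_distrib hf hg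

def subdivide (a : ℤ → ℝ) (y : ℤ → W) (n : ℤ) : W :=
  ∑ᶠ ℓ, a (n - 2 * ℓ) • y ℓ

-- The partial sums `γ^{(r)}_j` of the paper.
def maskPartialSum (a : ℤ → ℝ) (r j : ℤ) : ℝ := ∑ᶠ i ∈ Iic j, a (r - 2 * i)

def contractivityFactor (a : ℤ → ℝ) (r : ℤ) : ℝ :=
  ∑ᶠ j, |maskPartialSum a (r + 1) j - maskPartialSum a r j|

theorem maskPartialSum_add_two (a : ℤ → ℝ) (r j : ℤ) :
    maskPartialSum a (r + 2) j = maskPartialSum a r (j - 1) := by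
  rw [maskPartialSum, ← sub_add_cancel j 1, ← image_add_const_Iic,
    finsum_mem_image (add_left_injective 1).injOn, add_sub_cancel_right, maskPartialSum]
  exact finsum_mem_congr rfl fun i _ => congrArg a (by ring)

theorem contractivityFactor_periodic (a : ℤ → ℝ) : Periodic (contractivityFactor a) 2 := by
  intro r
  rw [contractivityFactor, contractivityFactor, ← finsum_comp_equiv (Equiv.addRight 1)]
  simp only [Equiv.coe_addRight, add_right_comm r 2 1, maskPartialSum_add_two,
    add_sub_cancel_right]

theorem contractivityFactor_le_max (a : ℤ → ℝ) (r : ℤ) :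
    contractivityFactor a r ≤ max (contractivityFactor a 1) (contractivityFactor a 2) := by
  have hper := contractivityFactor_periodic a
  obtain ⟨k, rfl | rfl⟩ := Int.even_or_odd' r
  · have h := hper.sub_int_mul_eq (x := 2) (1 - k)
    rw [Int.cast_id, show 2 - (1 - k) * 2 = 2 * k by ring] at h
    exact h ▸ le_max_right _ _
  · have h := hper.sub_int_mul_eq (x := 1) (-k)
    rw [Int.cast_id, show 1 - -k * 2 = 2 * k + 1 by ring] at h
    exact h ▸ le_max_left _ _

theorem norm_subdivide_add_one_sub_le {a : ℤ → ℝ} (ha : (support a).Finite)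
    (hconst : ∀ n, subdivide a (1 : ℤ → ℝ) n = 1)
    {y : ℤ → V} {δ : ℝ} (hy : ∀ j, ‖y (j + 1) - y j‖ ≤ δ) (n : ℤ) :
    ‖subdivide a y (n + 1) - subdivide a y n‖ ≤ contractivityFactor a n * δ := by
  have hfin : ∀ r, (support fun ℓ => a (r - 2 * ℓ)).Finite := fun r =>
    ha.preimage fun ℓ _ ℓ' _ h => by omega
  have hfin_smul : ∀ r, (support fun ℓ => a (r - 2 * ℓ) • y ℓ).Finite := fun r =>
    (hfin r).subset fun ℓ hℓ => left_ne_zero_of_smul hℓ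
  have hmass : ∀ r, ∑ᶠ ℓ, a (r - 2 * ℓ) = 1 := fun r => by simpa [subdivide] using hconst r
  set c : ℤ → ℝ := fun ℓ => a (n + 1 - 2 * ℓ) - a (n - 2 * ℓ)
  have hdiff : subdivide a y (n + 1) - subdivide a y n = ∑ᶠ ℓ, c ℓ • y ℓ := by
    simp only [subdivide, c, sub_smul]
    exact (finsum_sub_distrib (hfin_smul _) (hfin_smul _)).symm
  have hc0 : ∑ᶠ ℓ, c ℓ = 0 := by
    rw [finsum_sub_distrib (hfin _) (hfin _), hmass, hmass, sub_self]
  have hfactor : contractivityFactor a n = ∑ᶠ j, |∑ᶠ t ∈ Iic j, c t| := by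
    exact finsum_congr fun j => congrArg abs (finsum_mem_sub_distrib'
      ((hfin _).inter_of_right _) ((hfin _).inter_of_right _)).symm
  rw [hdiff, hfactor]
  exact norm_finsum_smul_le_of_finsum_eq_zero ((hfin _).union (hfin _) |>.subset
    (support_sub _ _)) hc0 hy

theorem support_maskOf_subset (α β : ℤ → ℝ) :
    support (maskOf α β) ⊆
      (fun j => -(2 * j)) '' support α ∪ (fun j => 1 - 2 * j) '' support β := by
  intro ℓ hℓ
  simp only [maskOf, mem_support] at hℓ
  split_ifs at hℓ with h
  · exact Or.inl ⟨-(ℓ / 2), hℓ, show -(2 * -(ℓ / 2)) = ℓ by omega⟩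
  · exact Or.inr ⟨(1 - ℓ) / 2, hℓ, show 1 - 2 * ((1 - ℓ) / 2) = ℓ by omega⟩

theorem maskOf_neg_two_mul (α β : ℤ → ℝ) (j : ℤ) : maskOf α β (-(2 * j)) = α j := by
  rw [maskOf, if_pos (by omega), show -(-(2 * j) / 2) = j by omega]

theorem maskOf_one_sub_two_mul (α β : ℤ → ℝ) (j : ℤ) : maskOf α β (1 - 2 * j) = β j := by
  rw [maskOf, if_neg (by omega), show (1 - (1 - 2 * j)) / 2 = j by omega]

theorem subdivide_maskOf_two_mul (α β : ℤ → ℝ)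
    {s : Finset ℤ} (hα : support α ⊆ s) (y : ℤ → W) (k : ℤ) :
    subdivide (maskOf α β) y (2 * k) = ∑ j ∈ s, α j • y (k + j) := by
  rw [subdivide, ← finsum_comp_equiv (Equiv.addLeft k)]
  refine (finsum_congr fun j => ?_).trans
    (finsum_eq_sum_of_support_subset _ fun j hj => hα (left_ne_zero_of_smul hj))
  rw [Equiv.coe_addLeft, show 2 * k - 2 * (k + j) = -(2 * j) by ring, maskOf_neg_two_mul]

theorem subdivide_maskOf_two_mul_add_one (α β : ℤ → ℝ)
    {s : Finset ℤ} (hβ : support β ⊆ s) (y : ℤ → W) (k : ℤ) :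
    subdivide (maskOf α β) y (2 * k + 1) = ∑ j ∈ s, β j • y (k + j) := by
  rw [subdivide, ← finsum_comp_equiv (Equiv.addLeft k)]
  refine (finsum_congr fun j => ?_).trans
    (finsum_eq_sum_of_support_subset _ fun j hj => hβ (left_ne_zero_of_smul hj))
  rw [Equiv.coe_addLeft, show 2 * k + 1 - 2 * (k + j) = 1 - 2 * j by ring,
    maskOf_one_sub_two_mul]

end

theorem stmt_10_general {V : Type*} [NormedAddCommGroup V] [NormedSpace ℝ V]
    (m : ℕ) (α β : ℤ → ℝ)
    (hαsupp : ∀ j, j ∉ Finset.Icc (-(m:ℤ)) ((m:ℤ)+1) → α j = 0)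
    (hβsupp : ∀ j, j ∉ Finset.Icc (-(m:ℤ)) ((m:ℤ)+1) → β j = 0)
    (hα1 : ∑ j ∈ Finset.Icc (-(m:ℤ)) ((m:ℤ)+1), α j = 1)
    (hβ1 : ∑ j ∈ Finset.Icc (-(m:ℤ)) ((m:ℤ)+1), β j = 1)
    (S : (ℤ → V) → (ℤ → V))
    (hSeven : ∀ (x : ℤ → V) (i : ℤ),
      S x (2*i) = ∑ j ∈ Finset.Icc (-(m:ℤ)) ((m:ℤ)+1), α j • x (i+j))
    (hSodd : ∀ (x : ℤ → V) (i : ℤ),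
      S x (2*i+1) = ∑ j ∈ Finset.Icc (-(m:ℤ)) ((m:ℤ)+1), β j • x (i+j))
    (γ : ℝ)
    (hγdef : γ = max
      (∑ᶠ j : ℤ, |(∑ᶠ i ∈ {i : ℤ | i ≤ j}, maskOf α β (2 - 2*i))
          - ∑ᶠ i ∈ {i : ℤ | i ≤ j}, maskOf α β (1 - 2*i)|)
      (∑ᶠ j : ℤ, |(∑ᶠ i ∈ {i : ℤ | i ≤ j}, maskOf α β (3 - 2*i))
          - ∑ᶠ i ∈ {i : ℤ | i ≤ j}, maskOf α β (2 - 2*i)|))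
    (x : ℤ → V) (δ : ℝ) (hδ : ∀ i, ‖x (i+1) - x i‖ ≤ δ) :
    ∀ i, ‖S x (i+1) - S x i‖ ≤ γ * δ := by
  set I := Finset.Icc (-(m:ℤ)) ((m:ℤ)+1)
  have hαI : support α ⊆ I := fun j hj => by_contra fun h => hj (hαsupp j h)
  have hβI : support β ⊆ I := fun j hj => by_contra fun h => hj (hβsupp j h)
  have hfin : (support (maskOf α β)).Finite := (((I.finite_toSet.subset hαI).image _).union
    ((I.finite_toSet.subset hβI).image _)).subset (support_maskOf_subset α β)
  have hS : S x = subdivide (maskOf α β) x := by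
    funext n
    obtain ⟨k, rfl | rfl⟩ := Int.even_or_odd' n
    · rw [hSeven, subdivide_maskOf_two_mul α β hαI]
    · rw [hSodd, subdivide_maskOf_two_mul_add_one α β hβI]
  have hconst : ∀ n, subdivide (maskOf α β) (1 : ℤ → ℝ) n = 1 := by
    intro n
    obtain ⟨k, rfl | rfl⟩ := Int.even_or_odd' n
    · simpa [subdivide_maskOf_two_mul α β hαI] using hα1
    · simpa [subdivide_maskOf_two_mul_add_one α β hβI] using hβ1
  have hγ' : γ = max (contractivityFactor (maskOf α β) 1) (contractivityFactor (maskOf α β) 2) :=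
    hγdef
  intro i
  rw [hS, hγ']
  exact (norm_subdivide_add_one_sub_le hfin hconst hδ i).trans <| mul_le_mul_of_nonneg_right
    (contractivityFactor_le_max _ i) ((norm_nonneg _).trans (hδ 0))

/-- A binary scheme with nonnegative mask whose contractivity factor
`γ = max_{r∈{1,2}} ∑_j |γ^{(r+1)}_j − γ^{(r)}_j| < 1` contracts consecutive
differences: `sup_i ‖(Sx)_{i+1} − (Sx)_i‖ ≤ γ · sup_i ‖x_{i+1} − x_i‖`. -/
theorem stmt_10 {V : Type*} [NormedAddCommGroup V] [NormedSpace ℝ V]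
    (m : ℕ) (α β : ℤ → ℝ)
    (hαsupp : ∀ j, j ∉ Finset.Icc (-(m:ℤ)) ((m:ℤ)+1) → α j = 0)
    (hβsupp : ∀ j, j ∉ Finset.Icc (-(m:ℤ)) ((m:ℤ)+1) → β j = 0)
    (hα1 : ∑ j ∈ Finset.Icc (-(m:ℤ)) ((m:ℤ)+1), α j = 1)
    (hβ1 : ∑ j ∈ Finset.Icc (-(m:ℤ)) ((m:ℤ)+1), β j = 1)
    (hαpos : ∀ j, 0 ≤ α j) (hβpos : ∀ j, 0 ≤ β j)
    (S : (ℤ → V) → (ℤ → V))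
    (hSeven : ∀ (x : ℤ → V) (i : ℤ),
      S x (2*i) = ∑ j ∈ Finset.Icc (-(m:ℤ)) ((m:ℤ)+1), α j • x (i+j))
    (hSodd : ∀ (x : ℤ → V) (i : ℤ),
      S x (2*i+1) = ∑ j ∈ Finset.Icc (-(m:ℤ)) ((m:ℤ)+1), β j • x (i+j))
    (γ : ℝ)
    (hγdef : γ = max
      (∑ᶠ j : ℤ, |(∑ᶠ i ∈ {i : ℤ | i ≤ j}, maskOf α β (2 - 2*i))
          - ∑ᶠ i ∈ {i : ℤ | i ≤ j}, maskOf α β (1 - 2*i)|)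
      (∑ᶠ j : ℤ, |(∑ᶠ i ∈ {i : ℤ | i ≤ j}, maskOf α β (3 - 2*i))
          - ∑ᶠ i ∈ {i : ℤ | i ≤ j}, maskOf α β (2 - 2*i)|))
    (hγ : γ < 1)
    (x : ℤ → V) (δ : ℝ) (hδ : ∀ i, ‖x (i+1) - x i‖ ≤ δ) :
    ∀ i, ‖S x (i+1) - S x i‖ ≤ γ * δ :=
  stmt_10_general m α β hαsupp hβsupp hα1 hβ1 S hSeven hSodd γ hγdef x δ hδ
end

section
/- Let (δ_j)_{j=-m}^{m+1} be real numbers with Σ_j δ_j = 0. Write δ_− = Σ_{δ_j<0} |δ_j| and δ_+ = Σ_{δ_j≥0} δ_j, so δ_− = δ_+. Define η¹_j = max(δ_j, 0) and η²_j = max(−δ_j, 0), and the step functions ε_1, ε_2: [0, δ_−] → {−m, …, m+1} by ε_k(t) = 1 + sup{ j : Σ_{i≤j} η^k_i < t }. Then ∫₀^{δ_−} |ε_1(t) − ε_2(t)| dt = Σ_{j=-m}^{m+1} |Σ_{i≤j} δ_i|. -/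
/-!
Write `S¹_j, S²_j` for the partial sums `∑_{i≤j} η¹_i, ∑_{i≤j} η²_i`; both are monotone in `j`, vanish
below `-m` and equal `δ₋` at `j = m + 1` (because `∑ δ_j = 0`). For `0 < t ≤ δ₋`, `ε_k(t)` is the least
`j` with `t ≤ S^k_j`, so `j < ε_k(t) ↔ S^k_j < t`. Both `{j | S¹_j < t}` and `{j | S²_j < t}` are initial
segments, hence `|ε₁(t) − ε₂(t)| = ∑_{-m ≤ j ≤ m} |𝟙[S¹_j < t] − 𝟙[S²_j < t]|`, and integrating the
`j`-th term over `t ∈ (0, δ₋]` gives `|S¹_j − S²_j| = |∑_{i≤j} δ_i|`. The missing term `j = m + 1` is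
`|∑ δ_j| = 0`.
-/

open MeasureTheory Set

/-- The paper's `ε(t) = 1 + sup {j | c j < t}`, with `a - 1` standing in for `sup ∅`. For monotone `c`
with `c (a - 1) < t ≤ c b` it is the least `j` with `t ≤ c j`. -/
noncomputable def crossingIndex (a : ℤ) (c : ℤ → ℝ) (t : ℝ) : ℤ :=
  1 + sSup (insert (a - 1) {j | c j < t})

section crossingIndex

variable {a b : ℤ} {c : ℤ → ℝ} {t : ℝ}

theorem lt_crossingIndex_iff (hc : Monotone c) (ha : c (a - 1) < t) (hb : t ≤ c b) (j : ℤ) :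
    j < crossingIndex a c t ↔ c j < t := by
  set S := {j | c j < t}
  have hS : insert (a - 1) S = S := insert_eq_of_mem ha
  have hbdd : BddAbove S := ⟨b, fun i hi => (hc.reflect_lt (hi.trans_le hb)).le⟩
  have hmem : sSup S ∈ S := Int.csSup_mem ⟨_, ha⟩ hbdd
  rw [crossingIndex, hS, add_comm, Int.lt_add_one_iff]
  exact ⟨fun hj => (hc hj).trans_lt hmem, fun hj => le_csSup hbdd hj⟩

theorem crossingIndex_mem_Icc (hc : Monotone c) (ha : c (a - 1) < t) (hb : t ≤ c b) :
    crossingIndex a c t ∈ Icc a b := by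
  have hlt := lt_crossingIndex_iff hc ha hb
  exact ⟨by linarith [(hlt (a - 1)).2 ha], not_lt.1 fun h => ((hlt b).1 h).not_ge hb⟩

end crossingIndex

theorem abs_sub_eq_sum_abs_ite_lt_sub {a b e₁ e₂ : ℤ} (h₁ : e₁ ∈ Icc a b) (h₂ : e₂ ∈ Icc a b) :
    |(e₁ - e₂ : ℝ)| = ∑ j ∈ Finset.Ico a b,
      |(if j < e₁ then (1 : ℝ) else 0) - (if j < e₂ then 1 else 0)| := by
  wlog h : e₂ ≤ e₁ generalizing e₁ e₂
  · rw [abs_sub_comm, this h₂ h₁ (not_le.1 h).le]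
    exact Finset.sum_congr rfl fun j _ => abs_sub_comm _ _
  have hterm : ∀ j, |(if j < e₁ then (1 : ℝ) else 0) - (if j < e₂ then 1 else 0)|
      = if j ∈ Finset.Ico e₂ e₁ then 1 else 0 := by
    intro j
    by_cases hj₁ : j < e₁ <;> by_cases hj₂ : j < e₂ <;> simp [hj₁, hj₂]; omega
  have hsub : Finset.Ico e₂ e₁ ⊆ Finset.Ico a b := Finset.Ico_subset_Ico h₂.1 h₁.2
  rw [Finset.sum_congr rfl fun j _ => hterm j, Finset.sum_ite_mem, Finset.inter_eq_right.2 hsub,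
    Finset.sum_const, Int.card_Ico, nsmul_one, ← Int.cast_sub, ← Int.cast_abs,
    abs_of_nonneg (sub_nonneg.2 h), ← Int.cast_natCast, Int.toNat_of_nonneg (sub_nonneg.2 h)]

theorem integral_abs_ite_lt_sub_ite_lt {A B D : ℝ} (hA : A ∈ Icc 0 D) (hB : B ∈ Icc 0 D) :
    ∫ t in (0 : ℝ)..D, |(if A < t then (1 : ℝ) else 0) - (if B < t then 1 else 0)| = |A - B| := by
  have hind : (fun t => |(if A < t then (1 : ℝ) else 0) - (if B < t then 1 else 0)|)
      = (Ioc (min A B) (max A B)).indicator fun _ => 1 := by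
    ext t
    simp only [indicator, mem_Ioc, min_lt_iff, le_max_iff]
    by_cases hAt : A < t <;> by_cases hBt : B < t <;> simp [hAt, hBt]
  have hsub : Ioc (min A B) (max A B) ⊆ Ioc 0 D :=
    Ioc_subset_Ioc (le_min hA.1 hB.1) (max_le hA.2 hB.2)
  rw [hind, intervalIntegral.integral_of_le (hA.1.trans hA.2),
    integral_indicator_const _ measurableSet_Ioc, measureReal_restrict_apply measurableSet_Ioc,
    inter_eq_self_of_subset_left hsub, Real.volume_real_Ioc_of_le min_le_max, smul_eq_mul, mul_one,
    max_sub_min_eq_abs, abs_sub_comm]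

theorem monotone_ite_lt (x : ℝ) : Monotone fun t : ℝ => if x < t then (1 : ℝ) else 0 :=
  fun s t hst => by
    dsimp only
    split_ifs with hs ht
    exacts [le_rfl, absurd (hs.trans_le hst) ht, zero_le_one, le_rfl]

theorem integral_abs_crossingIndex_sub {a b : ℤ} {c₁ c₂ : ℤ → ℝ} {D : ℝ} (hab : a ≤ b)
    (hc₁ : Monotone c₁) (hc₂ : Monotone c₂) (h₁a : c₁ (a - 1) = 0) (h₂a : c₂ (a - 1) = 0)
    (h₁b : c₁ b = D) (h₂b : c₂ b = D) :
    ∫ t in (0 : ℝ)..D, |(crossingIndex a c₁ t : ℝ) - crossingIndex a c₂ t|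
      = ∑ j ∈ Finset.Ico a b, |c₁ j - c₂ j| := by
  have hD : 0 ≤ D := by linarith [hc₁ (show a - 1 ≤ b by omega)]
  have hpt : ∀ t ∈ Ioc 0 D, |(crossingIndex a c₁ t : ℝ) - crossingIndex a c₂ t|
      = ∑ j ∈ Finset.Ico a b, |(if c₁ j < t then (1 : ℝ) else 0) - (if c₂ j < t then 1 else 0)| := by
    rintro t ⟨ht0, htD⟩
    have h₁ := lt_crossingIndex_iff hc₁ (h₁a ▸ ht0) (h₁b ▸ htD)
    have h₂ := lt_crossingIndex_iff hc₂ (h₂a ▸ ht0) (h₂b ▸ htD)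
    rw [abs_sub_eq_sum_abs_ite_lt_sub (crossingIndex_mem_Icc hc₁ (h₁a ▸ ht0) (h₁b ▸ htD))
      (crossingIndex_mem_Icc hc₂ (h₂a ▸ ht0) (h₂b ▸ htD))]
    simp only [h₁, h₂]
  have hmem : ∀ {c : ℤ → ℝ}, Monotone c → c (a - 1) = 0 → c b = D → ∀ j ∈ Finset.Ico a b,
      c j ∈ Icc 0 D := fun hc ha hb j hj => by
    rw [Finset.mem_Ico] at hj
    exact ⟨ha ▸ hc (by omega), hb ▸ hc hj.2.le⟩
  have hint : ∀ j ∈ Finset.Ico a b, IntervalIntegrable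
      (fun t => |(if c₁ j < t then (1 : ℝ) else 0) - (if c₂ j < t then 1 else 0)|) volume 0 D :=
    fun j _ => ((monotone_ite_lt (c₁ j)).intervalIntegrable.sub
      (monotone_ite_lt (c₂ j)).intervalIntegrable).abs
  rw [intervalIntegral.integral_congr_ae (Filter.Eventually.of_forall fun t ht =>
      hpt t (uIoc_of_le hD ▸ ht)), intervalIntegral.integral_finsetSum hint]
  exact Finset.sum_congr rfl fun j hj =>
    integral_abs_ite_lt_sub_ite_lt (hmem hc₁ h₁a h₁b j hj) (hmem hc₂ h₂a h₂b j hj)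

section partialSum

variable {a : ℤ} {f : ℤ → ℝ}

theorem monotone_sum_Icc_of_nonneg (hf : ∀ i, 0 ≤ f i) : Monotone fun j => ∑ i ∈ Finset.Icc a j, f i :=
  fun _ _ hjk => Finset.sum_le_sum_of_subset_of_nonneg (Finset.Icc_subset_Icc_right hjk)
    fun i _ _ => hf i

theorem sum_Icc_sub_one_self : ∑ i ∈ Finset.Icc a (a - 1), f i = 0 := by
  rw [Finset.Icc_eq_empty (by omega), Finset.sum_empty]

end partialSum

theorem stmt_14_general (m : ℕ) (δ : ℤ → ℝ)
    (hδsum : ∑ j ∈ Finset.Icc (-(m:ℤ)) ((m:ℤ)+1), δ j = 0)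
    (δminus : ℝ)
    (hδminus : δminus = ∑ j ∈ Finset.Icc (-(m:ℤ)) ((m:ℤ)+1), max (-δ j) 0)
    (ε₁ ε₂ : ℝ → ℤ)
    (hε₁ : ∀ t : ℝ, ε₁ t = 1 + sSup (insert (-(m:ℤ) - 1)
      {j : ℤ | ∑ i ∈ Finset.Icc (-(m:ℤ)) j, max (δ i) 0 < t}))
    (hε₂ : ∀ t : ℝ, ε₂ t = 1 + sSup (insert (-(m:ℤ) - 1)
      {j : ℤ | ∑ i ∈ Finset.Icc (-(m:ℤ)) j, max (-δ i) 0 < t})) :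
    ∫ t in (0:ℝ)..δminus, |((ε₁ t : ℝ)) - ((ε₂ t : ℝ))|
      = ∑ j ∈ Finset.Icc (-(m:ℤ)) ((m:ℤ)+1),
          |∑ i ∈ Finset.Icc (-(m:ℤ)) j, δ i| := by
  have hsub (j : ℤ) : ∑ i ∈ Finset.Icc (-(m:ℤ)) j, max (δ i) 0
      - ∑ i ∈ Finset.Icc (-(m:ℤ)) j, max (-δ i) 0 = ∑ i ∈ Finset.Icc (-(m:ℤ)) j, δ i := by
    rw [← Finset.sum_sub_distrib]
    exact Finset.sum_congr rfl fun i _ => max_zero_sub_max_neg_zero_eq_self (δ i)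
  have hpos : ∑ i ∈ Finset.Icc (-(m:ℤ)) ((m:ℤ)+1), max (δ i) 0 = δminus := by
    linarith [hsub ((m:ℤ)+1)]
  rw [show ε₁ = crossingIndex (-(m:ℤ)) _ from funext hε₁,
    show ε₂ = crossingIndex (-(m:ℤ)) _ from funext hε₂,
    integral_abs_crossingIndex_sub (b := (m:ℤ)+1) (by omega)
      (monotone_sum_Icc_of_nonneg fun i => le_max_right _ 0)
      (monotone_sum_Icc_of_nonneg fun i => le_max_right _ 0)
      sum_Icc_sub_one_self sum_Icc_sub_one_self hpos hδminus.symm,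
    ← Finset.Ico_insert_right (by omega), Finset.sum_insert Finset.right_notMem_Ico, hδsum,
    abs_zero, zero_add]
  exact Finset.sum_congr rfl fun j _ => by rw [hsub]

/-- The combinatorial integral identity used in Lemma 4: with
`δ_j` summing to 0, `η¹_j = max(δ_j,0)`, `η²_j = max(−δ_j,0)` and step functions
`ε_k(t) = 1 + sup {j : ∑_{i≤j} η^k_i < t}` (sup of the empty set being `−m−1`),
one has `∫₀^{δ₋} |ε₁(t) − ε₂(t)| dt = ∑_j |∑_{i≤j} δ_i|`. -/
theorem stmt_14 (m : ℕ) (δ : ℤ → ℝ)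
    (hδ0 : ∀ j, j ∉ Finset.Icc (-(m:ℤ)) ((m:ℤ)+1) → δ j = 0)
    (hδsum : ∑ j ∈ Finset.Icc (-(m:ℤ)) ((m:ℤ)+1), δ j = 0)
    (δminus : ℝ)
    (hδminus : δminus = ∑ j ∈ Finset.Icc (-(m:ℤ)) ((m:ℤ)+1), max (-δ j) 0)
    (ε₁ ε₂ : ℝ → ℤ)
    (hε₁ : ∀ t : ℝ, ε₁ t = 1 + sSup (insert (-(m:ℤ) - 1)
      {j : ℤ | ∑ i ∈ Finset.Icc (-(m:ℤ)) j, max (δ i) 0 < t}))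
    (hε₂ : ∀ t : ℝ, ε₂ t = 1 + sSup (insert (-(m:ℤ) - 1)
      {j : ℤ | ∑ i ∈ Finset.Icc (-(m:ℤ)) j, max (-δ i) 0 < t})) :
    ∫ t in (0:ℝ)..δminus, |((ε₁ t : ℝ)) - ((ε₂ t : ℝ))|
      = ∑ j ∈ Finset.Icc (-(m:ℤ)) ((m:ℤ)+1),
          |∑ i ∈ Finset.Icc (-(m:ℤ)) j, δ i| :=
  stmt_14_general m δ hδsum δminus hδminus ε₁ ε₂ hε₁ hε₂
end
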